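/- arXiv:1309.0680 — 2 statements merged into one kernel-verified Lean document; each statement's English description precedes it below -/
import Mathlib

section
/- Let G be the line graph of a bipartite graph and let (A,B) be a skew partition of G. Then the skew cutset B is either a star (contains a vertex adjacent to all other vertices of B) or B induces a 4-cycle (square). -/
open SimpleGraph

universe u

namespace BSP

variable {V : Type*}

/-- A walk is induced: any two adjacent vertices of its support are consecutive on it. -/
def IsInducedWalk (G : SimpleGraph V) {u v : V} (p : G.Walk u v) : Prop :=
  ∀ x ∈ p.support, ∀ y ∈ p.support, G.Adj x y → s(x, y) ∈ p.edges

/-- An induced path. -/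
def IsInducedPath (G : SimpleGraph V) {u v : V} (p : G.Walk u v) : Prop :=
  p.IsPath ∧ IsInducedWalk G p

/-- An induced cycle. -/
def IsInducedCycle (G : SimpleGraph V) {u : V} (p : G.Walk u u) : Prop :=
  p.IsCycle ∧ IsInducedWalk G p

/-- `G` has an odd hole: an induced odd cycle of length at least 5. -/
def HasOddHole (G : SimpleGraph V) : Prop :=
  ∃ (u : V) (p : G.Walk u u), IsInducedCycle G p ∧ Odd p.length ∧ 5 ≤ p.length

/-- A graph is Berge if neither it nor its complement has an odd hole. -/
def Berge (G : SimpleGraph V) : Prop := ¬ HasOddHole G ∧ ¬ HasOddHole Gᶜ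

/-- `x` is an interior vertex of the walk `p`. -/
def Interior {G : SimpleGraph V} {u v : V} (p : G.Walk u v) (x : V) : Prop :=
  x ∈ p.support ∧ x ≠ u ∧ x ≠ v

/-- A skew partition `(A, B)` of `G`. -/
def IsSkewPartition (G : SimpleGraph V) (A B : Set V) : Prop :=
  A.Nonempty ∧ B.Nonempty ∧ Disjoint A B ∧ A ∪ B = Set.univ ∧
  ¬ (G.induce A).Connected ∧ ¬ ((Gᶜ).induce B).Connected

/-- A balanced skew partition. -/
def IsBalancedSkewPartition (G : SimpleGraph V) (A B : Set V) : Prop :=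
  IsSkewPartition G A B ∧
  (∀ (x y : V) (p : G.Walk x y), IsInducedPath G p → 2 ≤ p.length →
     x ∈ B → y ∈ B → (∀ z, Interior p z → z ∈ A) → Even p.length) ∧
  (∀ (x y : V) (q : (Gᶜ).Walk x y), IsInducedPath Gᶜ q → 2 ≤ q.length →
     x ∈ A → y ∈ A → (∀ z, Interior q z → z ∈ B) → Even q.length)

def HasBalancedSkewPartition (G : SimpleGraph V) : Prop :=
  ∃ A B : Set V, IsBalancedSkewPartition G A B

def IsSkewCutset (G : SimpleGraph V) (B : Set V) : Prop :=
  IsSkewPartition G Bᶜ B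

def IsBalancedSkewCutset (G : SimpleGraph V) (B : Set V) : Prop :=
  IsBalancedSkewPartition G Bᶜ B

/-- `C` is a cutset of `G`. -/
def IsCutset (G : SimpleGraph V) (C : Set V) : Prop :=
  ¬ (G.induce (Cᶜ : Set V)).Connected

/-- A star: a set with a vertex adjacent to all the others in it. -/
def IsStar (G : SimpleGraph V) (B : Set V) : Prop :=
  ∃ x ∈ B, ∀ y ∈ B, y ≠ x → G.Adj x y

def HasStarCutset (G : SimpleGraph V) : Prop :=
  ∃ B : Set V, IsStar G B ∧ IsCutset G B

/-- A 2-join of `G` with split `(X1, X2, A1, B1, A2, B2)`. -/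
def IsTwoJoinSplit (G : SimpleGraph V) (X1 X2 A1 B1 A2 B2 : Set V) : Prop :=
  Disjoint X1 X2 ∧ X1 ∪ X2 = Set.univ ∧
  A1 ⊆ X1 ∧ B1 ⊆ X1 ∧ A2 ⊆ X2 ∧ B2 ⊆ X2 ∧
  Disjoint A1 B1 ∧ Disjoint A2 B2 ∧
  A1.Nonempty ∧ B1.Nonempty ∧ A2.Nonempty ∧ B2.Nonempty ∧
  (∀ a1 ∈ A1, ∀ a2 ∈ A2, G.Adj a1 a2) ∧
  (∀ b1 ∈ B1, ∀ b2 ∈ B2, G.Adj b1 b2) ∧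
  (∀ x ∈ X1, ∀ y ∈ X2, G.Adj x y → (x ∈ A1 ∧ y ∈ A2) ∨ (x ∈ B1 ∧ y ∈ B2))

/-- Reachability inside a set of vertices. -/
def ReachIn (G : SimpleGraph V) (S : Set V) (u v : V) : Prop :=
  ∃ p : G.Walk u v, ∀ x ∈ p.support, x ∈ S

/-- Every component of `G[X]` meets both `A` and `B`. -/
def SideConnected (G : SimpleGraph V) (X A B : Set V) : Prop :=
  ∀ v ∈ X, (∃ a ∈ A, ReachIn G X v a) ∧ (∃ b ∈ B, ReachIn G X v b)

def IsConnectedTwoJoin (G : SimpleGraph V) (X1 X2 A1 B1 A2 B2 : Set V) : Prop :=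
  IsTwoJoinSplit G X1 X2 A1 B1 A2 B2 ∧
  SideConnected G X1 A1 B1 ∧ SideConnected G X2 A2 B2

/-- `X` has at least 3 vertices and is not a path of length 2 from `A` to `B`
with interior in `X \ (A ∪ B)`. -/
def SideSubstantial (G : SimpleGraph V) (X A B : Set V) : Prop :=
  3 ≤ X.ncard ∧
  ¬ ∃ a ∈ A, ∃ b ∈ B, ∃ c ∈ X \ (A ∪ B),
      X = {a, c, b} ∧ G.Adj a c ∧ G.Adj c b ∧ ¬ G.Adj a b

def IsSubstantialTwoJoin (G : SimpleGraph V) (X1 X2 A1 B1 A2 B2 : Set V) : Prop :=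
  IsTwoJoinSplit G X1 X2 A1 B1 A2 B2 ∧
  SideSubstantial G X1 A1 B1 ∧ SideSubstantial G X2 A2 B2

def IsProperTwoJoin (G : SimpleGraph V) (X1 X2 A1 B1 A2 B2 : Set V) : Prop :=
  IsConnectedTwoJoin G X1 X2 A1 B1 A2 B2 ∧
  SideSubstantial G X1 A1 B1 ∧ SideSubstantial G X2 A2 B2

/-- A degenerate 2-join. -/
def IsDegenerate (G : SimpleGraph V) (X1 X2 A1 B1 A2 B2 : Set V) : Prop :=
  (∃ v ∈ A1, ∀ w ∈ X1 \ A1, ¬ G.Adj v w) ∨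
  (∃ v ∈ B1, ∀ w ∈ X1 \ B1, ¬ G.Adj v w) ∨
  (∃ v ∈ A2, ∀ w ∈ X2 \ A2, ¬ G.Adj v w) ∨
  (∃ v ∈ B2, ∀ w ∈ X2 \ B2, ¬ G.Adj v w) ∨
  IsSkewCutset G (A1 ∪ A2) ∨ IsSkewCutset G (B1 ∪ B2) ∨
  ¬ (SideConnected G X1 A1 B1 ∧ SideConnected G X2 A2 B2) ∨
  (∃ v ∈ A1, ∀ w ∈ B1, G.Adj v w) ∨ (∃ v ∈ B1, ∀ w ∈ A1, G.Adj v w) ∨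
  (∃ v ∈ A2, ∀ w ∈ B2, G.Adj v w) ∨ (∃ v ∈ B2, ∀ w ∈ A2, G.Adj v w) ∨
  (∃ v ∈ X1 \ (A1 ∪ B1), ∀ w ∈ A1 ∪ B1, G.Adj v w) ∨
  (∃ v ∈ X2 \ (A2 ∪ B2), ∀ w ∈ A2 ∪ B2, G.Adj v w)

/-- An induced path from `A` to `B` with no interior vertex in `A ∪ B`. -/
def CrossPath (G : SimpleGraph V) (A B : Set V) {u v : V} (p : G.Walk u v) : Prop :=
  IsInducedPath G p ∧ u ∈ A ∧ v ∈ B ∧ ∀ x, Interior p x → x ∉ A ∪ B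

/-- An induced path of length at least 2 with both ends in `S` and no interior vertex in `S`. -/
def OutgoingPath (G : SimpleGraph V) (S : Set V) {u v : V} (p : G.Walk u v) : Prop :=
  IsInducedPath G p ∧ 2 ≤ p.length ∧ u ∈ S ∧ v ∈ S ∧ ∀ x, Interior p x → x ∉ S

def claw : SimpleGraph (Fin 1 ⊕ Fin 3) := completeBipartiteGraph (Fin 1) (Fin 3)

def diamond : SimpleGraph (Fin 4) := (⊤ : SimpleGraph (Fin 4)).deleteEdges {s(0, 1)}

def ClawFree (G : SimpleGraph V) : Prop := IsEmpty (claw ↪g G)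

def DiamondFree (G : SimpleGraph V) : Prop := IsEmpty (diamond ↪g G)

def IsLineGraphOfBipartite {V : Type u} (G : SimpleGraph V) : Prop :=
  ∃ (W : Type u) (H : SimpleGraph W), H.Colorable 2 ∧ Nonempty (G ≃g H.lineGraph)

/-- Double split graph structure. -/
structure IsDoubleSplit (G : SimpleGraph V) (m n : ℕ)
    (a b : Fin m → V) (c d : Fin n → V) : Prop where
  hm : 2 ≤ m
  hn : 2 ≤ n
  inj : Function.Injective (Sum.elim (Sum.elim a b) (Sum.elim c d))
  cover : Set.range a ∪ Set.range b ∪ Set.range c ∪ Set.range d = Set.univ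
  hab : ∀ i, G.Adj (a i) (b i)
  habne : ∀ i i', i ≠ i' →
    ¬ G.Adj (a i) (a i') ∧ ¬ G.Adj (a i) (b i') ∧ ¬ G.Adj (b i) (b i')
  hcd : ∀ j, ¬ G.Adj (c j) (d j)
  hcdall : ∀ j j', j ≠ j' →
    G.Adj (c j) (c j') ∧ G.Adj (c j) (d j') ∧ G.Adj (d j) (d j')
  cross : ∀ i j,
    (G.Adj (a i) (c j) ∧ G.Adj (b i) (d j) ∧ ¬ G.Adj (a i) (d j) ∧ ¬ G.Adj (b i) (c j)) ∨
    (G.Adj (a i) (d j) ∧ G.Adj (b i) (c j) ∧ ¬ G.Adj (a i) (c j) ∧ ¬ G.Adj (b i) (d j))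

/-- Path-double split graph structure. -/
structure IsPathDoubleSplit (G : SimpleGraph V) (m n : ℕ)
    (a b : Fin m → V) (c d : Fin n → V) (E : Set V) : Prop where
  hm : 2 ≤ m
  hn : 2 ≤ n
  inj : Function.Injective (Sum.elim (Sum.elim a b) (Sum.elim c d))
  notinE : ∀ i, a i ∉ E ∧ b i ∉ E
  notinE' : ∀ j, c j ∉ E ∧ d j ∉ E
  cover : Set.range a ∪ Set.range b ∪ Set.range c ∪ Set.range d ∪ E = Set.univ
  hE : ∀ v ∈ E, (G.neighborSet v).ncard = 2 ∧
    ∃ (i : Fin m) (p : G.Walk (a i) (b i)), IsInducedPath G p ∧ Odd p.length ∧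
      (∀ x, Interior p x → x ∈ E) ∧ v ∈ p.support
  hpath : ∀ i, ∃! p : G.Walk (a i) (b i),
    IsInducedPath G p ∧ Odd p.length ∧ (∀ x, Interior p x → x ∈ E)
  habne : ∀ i i', i ≠ i' →
    ¬ G.Adj (a i) (a i') ∧ ¬ G.Adj (a i) (b i') ∧ ¬ G.Adj (b i) (b i')
  hcd : ∀ j, ¬ G.Adj (c j) (d j)
  hcdall : ∀ j j', j ≠ j' →
    G.Adj (c j) (c j') ∧ G.Adj (c j) (d j') ∧ G.Adj (d j) (d j')
  cross : ∀ i j,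
    (G.Adj (a i) (c j) ∧ G.Adj (b i) (d j) ∧ ¬ G.Adj (a i) (d j) ∧ ¬ G.Adj (b i) (c j)) ∨
    (G.Adj (a i) (d j) ∧ G.Adj (b i) (c j) ∧ ¬ G.Adj (a i) (c j) ∧ ¬ G.Adj (b i) (d j))

/-- Path-cobipartite graph. -/
def IsPathCobipartite (G : SimpleGraph V) : Prop :=
  Berge G ∧ ∃ A B P : Set V,
    Disjoint A B ∧ Disjoint A P ∧ Disjoint B P ∧ A ∪ B ∪ P = Set.univ ∧
    A.Nonempty ∧ B.Nonempty ∧ G.IsClique A ∧ G.IsClique B ∧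
    ∀ v ∈ P, (G.neighborSet v).ncard = 2 ∧
      ∃ a ∈ A, ∃ b ∈ B, ∃ p : G.Walk a b, IsInducedPath G p ∧ Odd p.length ∧
        Interior p v ∧ (∀ x, Interior p x → x ∈ P) ∧
        (∀ w, G.Adj a w → w ∈ A ∪ P) ∧ (∀ w, G.Adj b w → w ∈ B ∪ P) ∧
        (∀ (a' b' : V), a' ∈ A → b' ∈ B → ∀ p' : G.Walk a' b',
          IsInducedPath G p' → Odd p'.length → Interior p' v →
          (∀ x, Interior p' x → x ∈ P) →
          {x | x ∈ p'.support} = {x | x ∈ p.support})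

/-- `X` induces a path of `G` with one end in `A`, the other in `B` and interior
outside `A ∪ B`. -/
def PathSideOn (G : SimpleGraph V) (X A B : Set V) : Prop :=
  ∃ a ∈ A, ∃ b ∈ B, ∃ p : G.Walk a b, IsInducedPath G p ∧
    {x | x ∈ p.support} = X ∧ ∀ x, Interior p x → x ∉ A ∪ B

/-- The block of a 2-join: keep the side `X` (with attachments `A`, `B`) and replace the
other side by a path `p_0, …, p_k`, `p_0` complete to `A` and `p_k` complete to `B`. -/
def blockGraph (G : SimpleGraph V) (X A B : Set V) (k : ℕ) :
    SimpleGraph (↥X ⊕ Fin (k + 1)) where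
  Adj x y :=
    match x, y with
    | Sum.inl u, Sum.inl v => G.Adj u v
    | Sum.inl u, Sum.inr i => ((i : ℕ) = 0 ∧ (u : V) ∈ A) ∨ ((i : ℕ) = k ∧ (u : V) ∈ B)
    | Sum.inr i, Sum.inl u => ((i : ℕ) = 0 ∧ (u : V) ∈ A) ∨ ((i : ℕ) = k ∧ (u : V) ∈ B)
    | Sum.inr i, Sum.inr j => (i : ℕ) + 1 = (j : ℕ) ∨ (j : ℕ) + 1 = (i : ℕ)
  symm := by
    constructor
    rintro (u | i) (v | j) h
    · exact h.symm
    · exact h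
    · exact h
    · omega
  loopless := by
    constructor
    rintro (u | i) h
    · exact G.irrefl h
    · omega

/-- The graph `G'` obtained from a Bienstock graph `G` by adding two vertices
(`Sum.inr false` and `Sum.inr true`), each adjacent exactly to `u` and `s`. -/
def bienstockExt (G : SimpleGraph V) (u s : V) : SimpleGraph (V ⊕ Bool) where
  Adj x y :=
    match x, y with
    | Sum.inl p, Sum.inl q => G.Adj p q
    | Sum.inl p, Sum.inr _ => p = u ∨ p = s
    | Sum.inr _, Sum.inl q => q = u ∨ q = s
    | Sum.inr _, Sum.inr _ => False
  symm := by
    constructor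
    rintro (p | i) (q | j) h
    · exact h.symm
    · exact h
    · exact h
    · exact h
  loopless := by
    constructor
    rintro (p | i) h
    · exact G.irrefl h
    · exact h

end BSP

/-!
The skew cutset `B` splits into two nonempty parts `B₁`, `B₂` (a component of `Gᶜ[B]` and the
rest) with every vertex of `B₁` adjacent to every vertex of `B₂`. If either part is a clique, any of
its vertices is a centre of `B`. Otherwise each part contains a non-edge; since a line graph of a
bipartite graph has no diamond, a non-edge in one part forces the other part to be stable, and
since it has no claw, a stable part joined to a vertex has at most two elements. Hence `B` is two
non-edges joined completely, i.e. a square.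
-/

namespace BSP

variable {V W : Type*} {G : SimpleGraph V}

theorem clawFree_iff : ClawFree G ↔ ∀ ⦃x y₁ y₂ y₃ : V⦄, G.Adj x y₁ → G.Adj x y₂ → G.Adj x y₃ →
    y₁ ≠ y₂ → y₁ ≠ y₃ → y₂ ≠ y₃ → G.Adj y₁ y₂ ∨ G.Adj y₁ y₃ ∨ G.Adj y₂ y₃ := by
  constructor
  · intro h x y₁ y₂ y₃ h₁ h₂ h₃ h₁₂ h₁₃ h₂₃
    by_contra! hn
    let f : Fin 1 ⊕ Fin 3 → V := Sum.elim (fun _ => x) ![y₁, y₂, y₃]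
    have hinj : Function.Injective f := by
      rintro (i | i) (j | j) hij <;> fin_cases i <;> fin_cases j <;>
        simp_all [f, h₁.ne, h₂.ne, h₃.ne, h₁.ne.symm, h₂.ne.symm, h₃.ne.symm, h₁₂.symm,
          h₁₃.symm, h₂₃.symm]
    refine h.false ⟨⟨f, hinj⟩, ?_⟩
    rintro (i | i) (j | j) <;> fin_cases i <;> fin_cases j <;> simp_all [f, claw, G.adj_comm]
  · intro h
    refine ⟨fun f => ?_⟩
    have hadj : ∀ i j, G.Adj (f i) (f j) ↔ claw.Adj i j := fun _ _ => f.map_adj_iff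
    have := @h (f (.inl 0)) (f (.inr 0)) (f (.inr 1)) (f (.inr 2))
    simp only [hadj, ne_eq, EmbeddingLike.apply_eq_iff_eq] at this
    simp [claw] at this

theorem diamondFree_iff : DiamondFree G ↔ ∀ ⦃x₁ x₂ y z : V⦄, G.Adj y z → G.Adj x₁ y →
    G.Adj x₁ z → G.Adj x₂ y → G.Adj x₂ z → x₁ ≠ x₂ → G.Adj x₁ x₂ := by
  constructor
  · intro h x₁ x₂ y z hyz h₁y h₁z h₂y h₂z h₁₂
    by_contra hn
    let f : Fin 4 → V := ![x₁, x₂, y, z]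
    have hinj : Function.Injective f := by
      intro i j hij
      fin_cases i <;> fin_cases j <;>
        simp_all [f, hyz.ne, h₁y.ne, h₁z.ne, h₂y.ne, h₂z.ne, hyz.ne.symm, h₁y.ne.symm,
          h₁z.ne.symm, h₂y.ne.symm, h₂z.ne.symm]
    refine h.false ⟨⟨f, hinj⟩, ?_⟩
    intro i j
    fin_cases i <;> fin_cases j <;> simp_all [f, diamond, G.adj_comm]
  · intro h
    refine ⟨fun f => ?_⟩
    have hadj : ∀ i j, G.Adj (f i) (f j) ↔ diamond.Adj i j := fun _ _ => f.map_adj_iff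
    have := @h (f 0) (f 1) (f 2) (f 3)
    simp only [hadj, ne_eq, EmbeddingLike.apply_eq_iff_eq] at this
    simp [diamond] at this

theorem ClawFree.of_embedding {G' : SimpleGraph W} (e : G ↪g G') (h : ClawFree G') :
    ClawFree G :=
  ⟨fun f => h.false (e.comp f)⟩

theorem DiamondFree.of_embedding {G' : SimpleGraph W} (e : G ↪g G') (h : DiamondFree G') :
    DiamondFree G :=
  ⟨fun f => h.false (e.comp f)⟩

theorem _root_.Sym2.eq_or_eq_or_eq_of_mem {z : Sym2 W} {v₁ v₂ v₃ : W}
    (h₁ : v₁ ∈ z) (h₂ : v₂ ∈ z) (h₃ : v₃ ∈ z) : v₁ = v₂ ∨ v₁ = v₃ ∨ v₂ = v₃ := by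
  induction z using Sym2.ind with
  | _ a b =>
    rw [Sym2.mem_iff] at h₁ h₂ h₃
    rcases h₁ with rfl | rfl <;> rcases h₂ with rfl | rfl <;> rcases h₃ with rfl | rfl <;> tauto

theorem lineGraph_clawFree (H : SimpleGraph W) : ClawFree H.lineGraph := by
  rw [clawFree_iff]
  intro e f₁ f₂ f₃ h₁ h₂ h₃ h₁₂ h₁₃ h₂₃
  simp only [lineGraph_adj_iff_exists] at *
  obtain ⟨-, w₁, he₁, hf₁⟩ := h₁
  obtain ⟨-, w₂, he₂, hf₂⟩ := h₂
  obtain ⟨-, w₃, he₃, hf₃⟩ := h₃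
  rcases Sym2.eq_or_eq_or_eq_of_mem he₁ he₂ he₃ with rfl | rfl | rfl
  exacts [.inl ⟨h₁₂, w₁, hf₁, hf₂⟩, .inr (.inl ⟨h₁₃, w₁, hf₁, hf₃⟩),
    .inr (.inr ⟨h₂₃, w₂, hf₂, hf₃⟩)]

/-- Three pairwise incident edges either share an endpoint or form a triangle. -/
theorem exists_mem_of_lineGraph_triangle {H : SimpleGraph W} (hH : H.CliqueFree 3)
    {e f g : H.edgeSet} (hef : H.lineGraph.Adj e f) (heg : H.lineGraph.Adj e g)
    (hfg : H.lineGraph.Adj f g) :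
    ∃ w, w ∈ (e : Sym2 W) ∧ w ∈ (f : Sym2 W) ∧ w ∈ (g : Sym2 W) := by
  obtain ⟨-, a, hae, haf⟩ := lineGraph_adj_iff_exists.1 hef
  obtain ⟨-, b, hbe, hbg⟩ := lineGraph_adj_iff_exists.1 heg
  obtain ⟨-, c, hcf, hcg⟩ := lineGraph_adj_iff_exists.1 hfg
  by_cases hag : a ∈ (g : Sym2 W)
  · exact ⟨a, hae, haf, hag⟩
  by_cases hbf : b ∈ (f : Sym2 W)
  · exact ⟨b, hbe, hbf, hbg⟩
  by_cases hce : c ∈ (e : Sym2 W)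
  · exact ⟨c, hce, hcf, hcg⟩
  have hab : a ≠ b := by rintro rfl; exact hag hbg
  have hac : a ≠ c := by rintro rfl; exact hag hcg
  have hbc : b ≠ c := by rintro rfl; exact hbf hcf
  have hHab : H.Adj a b := by
    rw [← mem_edgeSet, ← (Sym2.mem_and_mem_iff hab).1 ⟨hae, hbe⟩]; exact e.2
  have hHac : H.Adj a c := by
    rw [← mem_edgeSet, ← (Sym2.mem_and_mem_iff hac).1 ⟨haf, hcf⟩]; exact f.2
  have hHbc : H.Adj b c := by
    rw [← mem_edgeSet, ← (Sym2.mem_and_mem_iff hbc).1 ⟨hbg, hcg⟩]; exact g.2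
  classical
  exact (hH {a, b, c} (is3Clique_triple_iff.2 ⟨hHab, hHac, hHbc⟩)).elim

theorem lineGraph_diamondFree {H : SimpleGraph W} (hH : H.CliqueFree 3) :
    DiamondFree H.lineGraph := by
  rw [diamondFree_iff]
  intro e₁ e₂ f g hfg h₁f h₁g h₂f h₂g h₁₂
  obtain ⟨v, hv₁, hvf, hvg⟩ := exists_mem_of_lineGraph_triangle hH h₁f h₁g hfg
  obtain ⟨w, hw₂, hwf, hwg⟩ := exists_mem_of_lineGraph_triangle hH h₂f h₂g hfg
  by_cases hvw : v = w
  · exact lineGraph_adj_iff_exists.2 ⟨h₁₂, v, hv₁, hvw ▸ hw₂⟩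
  · exact absurd (Subtype.ext (Sym2.eq_of_ne_mem hvw hvf hwf hvg hwg)) hfg.ne

theorem exists_complete_split_of_not_connected {B : Set V} (hB : B.Nonempty)
    (h : ¬ (Gᶜ.induce B).Connected) :
    ∃ B₁ B₂ : Set V, B₁.Nonempty ∧ B₂.Nonempty ∧ B₁ ∪ B₂ = B ∧ ∀ x ∈ B₁, ∀ y ∈ B₂, G.Adj x y := by
  have : Nonempty B := hB.to_subtype
  obtain ⟨u, v, huv⟩ : ∃ u v : B, ¬ (Gᶜ.induce B).Reachable u v := by
    simpa [connected_iff, Preconnected] using h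
  refine ⟨Subtype.val '' {b | (Gᶜ.induce B).Reachable u b},
    Subtype.val '' {b | (Gᶜ.induce B).Reachable u b}ᶜ, ⟨u, u, .refl u, rfl⟩, ⟨v, v, huv, rfl⟩,
    ?_, ?_⟩
  · rw [← Set.image_union, Set.union_compl_self, Set.image_univ, Subtype.range_coe]
  · rintro _ ⟨x, hx, rfl⟩ _ ⟨y, hy, rfl⟩
    by_contra hxy
    have hne : x ≠ y := by rintro rfl; exact hy hx
    exact hy (hx.trans (Adj.reachable (show (Gᶜ.induce B).Adj x y from
      ⟨Subtype.coe_injective.ne hne, hxy⟩)))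

theorem nonempty_induce_iso_cycleGraph_four {a a' b b' : V} (haa : a ≠ a') (hbb : b ≠ b')
    (hnaa : ¬G.Adj a a') (hnbb : ¬G.Adj b b') (hab : G.Adj a b) (hab' : G.Adj a b')
    (ha'b : G.Adj a' b) (ha'b' : G.Adj a' b') :
    Nonempty (G.induce ({a, a'} ∪ {b, b'}) ≃g cycleGraph 4) := by
  let f : Fin 4 → ↥(({a, a'} ∪ {b, b'}) : Set V) :=
    ![⟨a, by simp⟩, ⟨b, by simp⟩, ⟨a', by simp⟩, ⟨b', by simp⟩]
  have hinj : Function.Injective f := by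
    intro i j hij
    fin_cases i <;> fin_cases j <;>
      simp_all [f, Subtype.ext_iff, hab.ne, hab'.ne, ha'b.ne, ha'b'.ne, hab.ne.symm, hab'.ne.symm,
        ha'b.ne.symm, ha'b'.ne.symm, haa.symm, hbb.symm]
  have hsurj : Function.Surjective f := by
    rintro ⟨y, hy⟩
    simp only [Set.mem_union, Set.mem_insert_iff, Set.mem_singleton_iff] at hy
    rcases hy with (rfl | rfl) | rfl | rfl
    exacts [⟨0, rfl⟩, ⟨2, rfl⟩, ⟨1, rfl⟩, ⟨3, rfl⟩]
  have hadj : ∀ i j, (G.induce _).Adj (f i) (f j) ↔ (cycleGraph 4).Adj i j := by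
    intro i j
    rw [induce_adj]
    fin_cases i <;> fin_cases j <;>
      simp [f, hab, hab', ha'b, ha'b', hnaa, hnbb, G.adj_comm] <;> decide
  exact ⟨(Iso.symm ⟨Equiv.ofBijective f ⟨hinj, hsurj⟩, hadj _ _⟩ : _)⟩

theorem isStar_union_of_isClique {B₁ B₂ : Set V} (h₁ : G.IsClique B₁) {x : V} (hx : x ∈ B₁)
    (hc : ∀ x ∈ B₁, ∀ y ∈ B₂, G.Adj x y) : IsStar G (B₁ ∪ B₂) :=
  ⟨x, .inl hx, fun y hy hyx => hy.elim (fun hy => h₁ hx hy hyx.symm) (hc x hx y)⟩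

theorem DiamondFree.isIndepSet_of_forall_adj (h : DiamondFree G) {a a' : V} (haa : a ≠ a')
    (hn : ¬G.Adj a a') {S : Set V} (ha : ∀ y ∈ S, G.Adj a y) (ha' : ∀ y ∈ S, G.Adj a' y) :
    G.IsIndepSet S := fun y hy y' hy' _ hyy' =>
  hn (diamondFree_iff.1 h hyy' (ha y hy) (ha y' hy') (ha' y hy) (ha' y' hy') haa)

theorem ClawFree.eq_pair_of_isIndepSet (h : ClawFree G) {S : Set V} (hS : G.IsIndepSet S)
    {x : V} (hx : ∀ y ∈ S, G.Adj x y) {y₁ y₂ : V} (h₁ : y₁ ∈ S) (h₂ : y₂ ∈ S) (h₁₂ : y₁ ≠ y₂) :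
    S = {y₁, y₂} := by
  ext y
  refine ⟨fun hy => ?_, by rintro (rfl | rfl) <;> assumption⟩
  by_contra hy₁₂
  simp only [Set.mem_insert_iff, Set.mem_singleton_iff, not_or] at hy₁₂
  rcases clawFree_iff.1 h (hx _ h₁) (hx _ h₂) (hx _ hy) h₁₂ (Ne.symm hy₁₂.1) (Ne.symm hy₁₂.2)
    with h | h | h
  exacts [hS h₁ h₂ h₁₂ h, hS h₁ hy (Ne.symm hy₁₂.1) h, hS h₂ hy (Ne.symm hy₁₂.2) h]

theorem isStar_or_square_of_complete_split (hclaw : ClawFree G) (hdiam : DiamondFree G)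
    {B₁ B₂ : Set V} (h₁ : B₁.Nonempty) (h₂ : B₂.Nonempty) (hc : ∀ x ∈ B₁, ∀ y ∈ B₂, G.Adj x y) :
    IsStar G (B₁ ∪ B₂) ∨ Nonempty (G.induce (B₁ ∪ B₂) ≃g cycleGraph 4) := by
  have hc' : ∀ y ∈ B₂, ∀ x ∈ B₁, G.Adj y x := fun y hy x hx => (hc x hx y hy).symm
  by_cases hB₁ : G.IsClique B₁
  · exact .inl (isStar_union_of_isClique hB₁ h₁.some_mem hc)
  by_cases hB₂ : G.IsClique B₂
  · exact .inl (Set.union_comm B₂ B₁ ▸ isStar_union_of_isClique hB₂ h₂.some_mem hc')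
  rw [isClique_iff, Set.Pairwise] at hB₁ hB₂
  push Not at hB₁ hB₂
  obtain ⟨a, ha, a', ha', haa, hnaa⟩ := hB₁
  obtain ⟨b, hb, b', hb', hbb, hnbb⟩ := hB₂
  have hI₁ := hdiam.isIndepSet_of_forall_adj hbb hnbb (hc' b hb) (hc' b' hb')
  have hI₂ := hdiam.isIndepSet_of_forall_adj haa hnaa (hc a ha) (hc a' ha')
  rw [hclaw.eq_pair_of_isIndepSet hI₁ (hc' b hb) ha ha' haa,
    hclaw.eq_pair_of_isIndepSet hI₂ (hc a ha) hb hb' hbb]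
  exact .inr (nonempty_induce_iso_cycleGraph_four haa hbb hnaa hnbb (hc a ha b hb)
    (hc a ha b' hb') (hc a' ha' b hb) (hc a' ha' b' hb'))

end BSP

/-- In the line graph of a bipartite graph, every skew cutset is a star or
induces a square. -/
theorem line_graph_skew_cutset_star_or_square {V : Type u} (G : SimpleGraph V)
    (hline : BSP.IsLineGraphOfBipartite G) (A B : Set V)
    (hsp : BSP.IsSkewPartition G A B) :
    BSP.IsStar G B ∨ Nonempty ((G.induce B) ≃g SimpleGraph.cycleGraph 4) := by
  obtain ⟨W, H, hH, ⟨φ⟩⟩ := hline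
  obtain ⟨-, hB, -, -, -, hBc⟩ := hsp
  obtain ⟨B₁, B₂, h₁, h₂, rfl, hc⟩ := BSP.exists_complete_split_of_not_connected hB hBc
  exact BSP.isStar_or_square_of_complete_split
    ((BSP.lineGraph_clawFree H).of_embedding φ.toEmbedding)
    ((BSP.lineGraph_diamondFree (hH.cliqueFree (by norm_num))).of_embedding φ.toEmbedding)
    h₁ h₂ hc
end

section
/- Let G be a Berge graph with a 2-join (X1,X2) with split (X1,X2,A1,B1,A2,B2), and let Q be an induced antipath of G of length at least 5 whose interior vertices all lie in A1 ∪ X2 and whose end-vertices are not in A1. Then either Q has even length, or there exists a vertex a ∈ A1 ∪ B1 such that V(Q) ⊆ X2 ∪ {a}. -/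
open SimpleGraph

universe u

/-!
Index the antipath as `f 0, …, f n`, so that `f i` and `f j` are adjacent in `G` exactly when
`|i - j| ≥ 2`. Across the 2-join, a vertex of `A1` has only `A2`-neighbours in `X2` and a vertex
of `X1 \ A1` only `B2`-neighbours. Hence a vertex of `X2` next to an `A1`-vertex of the antipath
is not in `A2`, so no `A1`-vertex of the antipath lies at distance `≥ 2` from it.

If two consecutive vertices lie in `A1`, this spreads along the whole antipath: its interior lies
in `A1` and its ends in `X1 \ A1`, so every vertex of `A2` closes it into an antihole of length
`n + 2`, odd when `n` is. Otherwise at most one vertex lies in `A1`, and comparing the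
neighbourhoods of the ends shows that at most one vertex lies in `X1`; that vertex, or any vertex
of `A1` if there is none, is the required `a`.
-/

namespace BSP

variable {V : Type*}

section InducedPaths

variable {H : SimpleGraph V} {u v : V} {q : H.Walk u v}

theorem IsInducedPath.adj_getVert_iff (hq : IsInducedPath H q) {i j : ℕ}
    (hi : i ≤ q.length) (hj : j ≤ q.length) :
    H.Adj (q.getVert i) (q.getVert j) ↔ i + 1 = j ∨ j + 1 = i := by
  refine ⟨fun h => ?_, ?_⟩
  · obtain ⟨k, hk, he⟩ := (Walk.mk_mem_edges_iff_exists q).1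
      (hq.2 _ (q.getVert_mem_support i) _ (q.getVert_mem_support j) h)
    have hinj := hq.1.getVert_injOn
    rcases Sym2.eq_iff.1 he with ⟨h1, h2⟩ | ⟨h1, h2⟩
    · have := hinj (by simp; omega) hi h1
      have := hinj (by simp; omega) hj h2
      omega
    · have := hinj (by simp; omega) hj h1
      have := hinj (by simp; omega) hi h2
      omega
  · rintro (rfl | rfl)
    · exact q.adj_getVert_succ (by omega)
    · exact (q.adj_getVert_succ (by omega)).symm

theorem interior_getVert (hq : q.IsPath) {i : ℕ} (h0 : 0 < i) (hn : i < q.length) :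
    Interior q (q.getVert i) :=
  ⟨q.getVert_mem_support i, by rw [Ne, hq.getVert_eq_start_iff hn.le]; omega,
    by rw [Ne, hq.getVert_eq_end_iff hn.le]; omega⟩

theorem IsInducedPath.isInducedCycle_cons_concat (hq : IsInducedPath H q) (huv : u ≠ v)
    {w : V} (hw : w ∉ q.support) (hwu : H.Adj w u) (hvw : H.Adj v w)
    (hwq : ∀ x ∈ q.support, H.Adj w x → x = u ∨ x = v) :
    IsInducedCycle H (Walk.cons hwu (q.concat hvw)) := by
  refine ⟨(Walk.cons_isCycle_iff _ _).2 ⟨hq.1.concat hw hvw, ?_⟩, ?_⟩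
  · rw [Walk.edges_concat, List.concat_eq_append, List.mem_append, List.mem_singleton, not_or,
      Sym2.eq_iff]
    exact ⟨fun h => hw (q.fst_mem_support_of_mem_edges h),
      by rintro (⟨rfl, rfl⟩ | ⟨-, rfl⟩) <;> simp_all⟩
  · have hsupp : ∀ z ∈ (Walk.cons hwu (q.concat hvw)).support, z = w ∨ z ∈ q.support := by
      simp only [Walk.support_cons, Walk.support_concat, List.mem_cons, List.mem_append]
      tauto
    have hedge : ∀ x ∈ q.support, H.Adj w x →
        s(w, x) ∈ (Walk.cons hwu (q.concat hvw)).edges := by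
      intro x hx hwx
      rcases hwq x hx hwx with rfl | rfl <;> simp [Sym2.eq_swap]
    intro x hx y hy hxy
    rcases hsupp x hx with rfl | hxq <;> rcases hsupp y hy with rfl | hyq
    · exact absurd hxy (H.irrefl)
    · exact hedge y hyq hxy
    · rw [Sym2.eq_swap]; exact hedge x hxq hxy.symm
    · simp [hq.2 x hxq y hyq hxy]

end InducedPaths

section Antipaths

variable {G : SimpleGraph V} {f : ℕ → V} {n : ℕ}

def IsAntipathSeq (G : SimpleGraph V) (f : ℕ → V) (n : ℕ) : Prop :=
  ∀ i ≤ n, ∀ j ≤ n, (G.Adj (f i) (f j) ↔ i + 2 ≤ j ∨ j + 2 ≤ i)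

theorem IsInducedPath.isAntipathSeq {u v : V} {q : Gᶜ.Walk u v} (hq : IsInducedPath Gᶜ q) :
    IsAntipathSeq G q.getVert q.length := by
  intro i hi j hj
  have hcompl := hq.adj_getVert_iff hi hj
  rw [compl_adj, Ne, hq.1.getVert_injOn.eq_iff hi hj] at hcompl
  by_cases hij : i = j
  · subst hij
    simp
  · constructor
    · intro h
      by_contra hnear
      exact (hcompl.2 (by omega)).2 h
    · intro hfar
      by_contra h
      have := hcompl.1 ⟨hij, h⟩
      omega

theorem IsAntipathSeq.reverse (hf : IsAntipathSeq G f n) :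
    IsAntipathSeq G (fun i => f (n - i)) n := by
  intro i hi j hj
  rw [hf (n - i) (by omega) (n - j) (by omega)]
  omega

end Antipaths

namespace IsTwoJoinSplit

variable {G : SimpleGraph V} {X1 X2 A1 B1 A2 B2 : Set V} {x y : V}

theorem mem_X1_or_mem_X2 (hJ : IsTwoJoinSplit G X1 X2 A1 B1 A2 B2) (x : V) :
    x ∈ X1 ∨ x ∈ X2 := by
  obtain ⟨-, hcover, -⟩ := hJ
  exact (Set.ext_iff.1 hcover x).2 trivial

theorem notMem_X2 (hJ : IsTwoJoinSplit G X1 X2 A1 B1 A2 B2) (hx : x ∈ X1) : x ∉ X2 :=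
  Set.disjoint_left.1 hJ.1 hx

theorem A1_subset (hJ : IsTwoJoinSplit G X1 X2 A1 B1 A2 B2) : A1 ⊆ X1 := hJ.2.2.1

theorem A2_subset (hJ : IsTwoJoinSplit G X1 X2 A1 B1 A2 B2) : A2 ⊆ X2 := hJ.2.2.2.2.1

theorem A1_nonempty (hJ : IsTwoJoinSplit G X1 X2 A1 B1 A2 B2) : A1.Nonempty := by
  obtain ⟨-, -, -, -, -, -, -, -, hA1, -⟩ := hJ
  exact hA1

theorem A2_nonempty (hJ : IsTwoJoinSplit G X1 X2 A1 B1 A2 B2) : A2.Nonempty := by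
  obtain ⟨-, -, -, -, -, -, -, -, -, -, hA2, -⟩ := hJ
  exact hA2

theorem notMem_B2_of_mem_A2 (hJ : IsTwoJoinSplit G X1 X2 A1 B1 A2 B2) (hy : y ∈ A2) :
    y ∉ B2 := by
  obtain ⟨-, -, -, -, -, -, -, hAB2, -⟩ := hJ
  exact Set.disjoint_left.1 hAB2 hy

theorem adj_of_mem_A (hJ : IsTwoJoinSplit G X1 X2 A1 B1 A2 B2) (hx : x ∈ A1) (hy : y ∈ A2) :
    G.Adj x y := by
  obtain ⟨-, -, -, -, -, -, -, -, -, -, -, -, hAA, -⟩ := hJ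
  exact hAA x hx y hy

theorem adj_of_mem_B (hJ : IsTwoJoinSplit G X1 X2 A1 B1 A2 B2) (hx : x ∈ B1) (hy : y ∈ B2) :
    G.Adj x y := by
  obtain ⟨-, -, -, -, -, -, -, -, -, -, -, -, -, hBB, -⟩ := hJ
  exact hBB x hx y hy

theorem mem_A2_of_adj (hJ : IsTwoJoinSplit G X1 X2 A1 B1 A2 B2) (hx : x ∈ A1) (hy : y ∈ X2)
    (hxy : G.Adj x y) : y ∈ A2 := by
  obtain ⟨-, -, hA1, -, -, -, hAB1, -, -, -, -, -, -, -, hcross⟩ := hJ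
  exact ((hcross x (hA1 hx) y hy hxy).resolve_right fun h =>
    Set.disjoint_left.1 hAB1 hx h.1).2

theorem mem_B_of_adj (hJ : IsTwoJoinSplit G X1 X2 A1 B1 A2 B2) (hx : x ∈ X1) (hxA : x ∉ A1)
    (hy : y ∈ X2) (hxy : G.Adj x y) : x ∈ B1 ∧ y ∈ B2 := by
  obtain ⟨-, -, -, -, -, -, -, -, -, -, -, -, -, -, hcross⟩ := hJ
  exact (hcross x hx y hy hxy).resolve_left fun h => hxA h.1

theorem hasOddHole_compl_of_antipath_in_X1 (hJ : IsTwoJoinSplit G X1 X2 A1 B1 A2 B2)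
    {u v : V} {q : Gᶜ.Walk u v} (hq : IsInducedPath Gᶜ q) (hodd : Odd q.length)
    (h3 : 3 ≤ q.length) (hX1 : ∀ i ≤ q.length, q.getVert i ∈ X1)
    (hA1 : ∀ i, 0 < i → i < q.length → q.getVert i ∈ A1) (hu : u ∉ A1) (hv : v ∉ A1) :
    HasOddHole Gᶜ := by
  obtain ⟨a, ha⟩ := hJ.A2_nonempty
  have haX := hJ.A2_subset ha
  have hX1' : ∀ x ∈ q.support, x ∈ X1 := fun x hx => by
    obtain ⟨i, rfl, hi⟩ := Walk.mem_support_iff_exists_getVert.1 hx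
    exact hX1 i hi
  have hadj : ∀ x ∈ X1, x ∉ A1 → Gᶜ.Adj a x := fun x hx hxA =>
    (compl_adj G a x).2 ⟨fun h => hJ.notMem_X2 hx (h ▸ haX),
      fun h => hJ.notMem_B2_of_mem_A2 ha (hJ.mem_B_of_adj hx hxA haX h.symm).2⟩
  have hu' := hadj u (hX1' u q.start_mem_support) hu
  have hv' := hadj v (hX1' v q.end_mem_support) hv
  have huv : u ≠ v := fun h => by
    have := (hq.1.getVert_eq_start_iff le_rfl).1 (by rw [Walk.getVert_length]; exact h.symm)
    omega
  have hcyc := hq.isInducedCycle_cons_concat huv (fun h => hJ.notMem_X2 (hX1' a h) haX)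
    hu' hv'.symm fun x hx hax => by
      obtain ⟨i, rfl, hi⟩ := Walk.mem_support_iff_exists_getVert.1 hx
      by_contra hend
      rw [not_or, hq.1.getVert_eq_start_iff hi, hq.1.getVert_eq_end_iff hi] at hend
      exact ((compl_adj G _ _).1 hax).2 (hJ.adj_of_mem_A (hA1 i (by omega) (by omega)) ha).symm
  refine ⟨a, _, hcyc, ?_, ?_⟩
  · simp only [Walk.length_cons, Walk.length_concat]
    exact hodd.add_even even_two
  · simp only [Walk.length_cons, Walk.length_concat]
    omega

end IsTwoJoinSplit

section TwoJoinAntipaths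

variable {G : SimpleGraph V} {X1 X2 A1 B1 A2 B2 : Set V} {f : ℕ → V} {n : ℕ}

theorem IsAntipathSeq.near_of_mem_A1 (hJ : IsTwoJoinSplit G X1 X2 A1 B1 A2 B2)
    (hf : IsAntipathSeq G f n) {i j k : ℕ} (hi : i ≤ n) (hj : j ≤ n) (hk : k ≤ n)
    (hiA : f i ∈ A1) (hjX : f j ∈ X2) (hkA : f k ∈ A1) (hij : i + 1 = j ∨ j + 1 = i) :
    k + 1 = j ∨ j + 1 = k := by
  by_contra hkj
  have hkj : k + 2 ≤ j ∨ j + 2 ≤ k := by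
    have : k ≠ j := by
      rintro rfl
      exact hJ.notMem_X2 (hJ.A1_subset hkA) hjX
    omega
  have hjA := hJ.mem_A2_of_adj hkA hjX ((hf k hk j hj).2 hkj)
  have := (hf i hi j hj).1 (hJ.adj_of_mem_A hiA hjA)
  omega

theorem IsAntipathSeq.mem_X1_of_mem_A1_of_mem_A1 (hJ : IsTwoJoinSplit G X1 X2 A1 B1 A2 B2)
    (hf : IsAntipathSeq G f n) {m j : ℕ} (hm : m + 1 ≤ n) (hmA : f m ∈ A1)
    (hmA' : f (m + 1) ∈ A1) (hj : j ≤ n) (hjm : j + 1 = m ∨ j = m + 2) : f j ∈ X1 := by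
  refine (hJ.mem_X1_or_mem_X2 (f j)).resolve_right fun hjX => ?_
  rcases hjm with rfl | rfl
  · have := hf.near_of_mem_A1 hJ (by omega) hj hm hmA hjX hmA' (by omega)
    omega
  · have := hf.near_of_mem_A1 hJ hm hj (by omega) hmA' hjX hmA (by omega)
    omega

def AtMostOneIn (S : Set V) (f : ℕ → V) (n : ℕ) : Prop :=
  ∀ i ≤ n, ∀ j ≤ n, f i ∈ S → f j ∈ S → i = j

theorem AtMostOneIn.reverse {S : Set V} (h : AtMostOneIn S f n) :
    AtMostOneIn S (fun i => f (n - i)) n := by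
  intro i hi j hj hiS hjS
  have := h (n - i) (by omega) (n - j) (by omega) hiS hjS
  omega

structure IsA1X2Antipath (G : SimpleGraph V) (A1 X2 : Set V) (f : ℕ → V) (n : ℕ) : Prop where
  isAntipathSeq : IsAntipathSeq G f n
  interior_mem : ∀ i, 0 < i → i < n → f i ∈ A1 ∪ X2
  start_notMem : f 0 ∉ A1
  end_notMem : f n ∉ A1

theorem IsInducedPath.isA1X2Antipath {u v : V} {q : Gᶜ.Walk u v} (hq : IsInducedPath Gᶜ q)
    (hint : ∀ x, Interior q x → x ∈ A1 ∪ X2) (hu : u ∉ A1) (hv : v ∉ A1) :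
    IsA1X2Antipath G A1 X2 q.getVert q.length where
  isAntipathSeq := hq.isAntipathSeq
  interior_mem _ h0 hn := hint _ (interior_getVert hq.1 h0 hn)
  start_notMem := by simpa using hu
  end_notMem := by simpa using hv

namespace IsA1X2Antipath

theorem reverse (hQ : IsA1X2Antipath G A1 X2 f n) :
    IsA1X2Antipath G A1 X2 (fun i => f (n - i)) n where
  isAntipathSeq := hQ.isAntipathSeq.reverse
  interior_mem i h0 hn := hQ.interior_mem (n - i) (by omega) (by omega)
  start_notMem := by simpa using hQ.end_notMem
  end_notMem := by simpa using hQ.start_notMem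

theorem mem_X2 (hQ : IsA1X2Antipath G A1 X2 f n) {i : ℕ} (h0 : 0 < i) (hn : i < n)
    (hiA : f i ∉ A1) : f i ∈ X2 :=
  (hQ.interior_mem i h0 hn).resolve_left hiA

theorem mem_A1 (hJ : IsTwoJoinSplit G X1 X2 A1 B1 A2 B2) (hQ : IsA1X2Antipath G A1 X2 f n)
    {i : ℕ} (h0 : 0 < i) (hn : i < n) (hiX : f i ∈ X1) : f i ∈ A1 :=
  (hQ.interior_mem i h0 hn).resolve_right (hJ.notMem_X2 hiX)

theorem pos_of_mem_A1 (hQ : IsA1X2Antipath G A1 X2 f n) {i : ℕ} (hiA : f i ∈ A1) : 0 < i :=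
  Nat.pos_of_ne_zero fun h => hQ.start_notMem (h ▸ hiA)

theorem lt_of_mem_A1 (hQ : IsA1X2Antipath G A1 X2 f n) {i : ℕ} (hi : i ≤ n) (hiA : f i ∈ A1) :
    i < n :=
  lt_of_le_of_ne hi fun h => hQ.end_notMem (h ▸ hiA)

theorem forall_mem_A1_of_mem_A1_succ (hJ : IsTwoJoinSplit G X1 X2 A1 B1 A2 B2)
    (hQ : IsA1X2Antipath G A1 X2 f n) {c : ℕ} (hc : c + 1 ≤ n) (hcA : f c ∈ A1)
    (hcA' : f (c + 1) ∈ A1) : ∀ m, 0 < m → m < n → f m ∈ A1 := by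
  have extend : ∀ m j, m + 1 ≤ n → f m ∈ A1 → f (m + 1) ∈ A1 → j + 1 = m ∨ j = m + 2 →
      0 < j → j < n → f j ∈ A1 := fun m j hm hmA hmA' hjm h0 hn =>
    hQ.mem_A1 hJ h0 hn (hQ.isAntipathSeq.mem_X1_of_mem_A1_of_mem_A1 hJ hm hmA hmA' hn.le hjm)
  have up : ∀ m, c ≤ m → m + 1 < n → f m ∈ A1 ∧ f (m + 1) ∈ A1 := by
    intro m hcm
    induction m, hcm using Nat.le_induction with
    | base => exact fun _ => ⟨hcA, hcA'⟩
    | succ m _ ih =>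
      intro hm
      obtain ⟨hmA, hmA'⟩ := ih (by omega)
      exact ⟨hmA', extend m (m + 2) (by omega) hmA hmA' (by omega) (by omega) hm⟩
  have down : ∀ m, m ≤ c → 0 < m → f m ∈ A1 ∧ f (m + 1) ∈ A1 := by
    intro m hmc
    induction hmc using Nat.decreasingInduction with
    | self => exact fun _ => ⟨hcA, hcA'⟩
    | of_succ m _ ih =>
      intro h0
      obtain ⟨hmA, hmA'⟩ := ih (by omega)
      exact ⟨extend (m + 1) m (by omega) hmA hmA' (by omega) h0 (by omega), hmA⟩
  intro m h0 hn
  rcases le_or_gt m c with hmc | hcm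
  · exact (down m hmc h0).1
  · obtain ⟨k, rfl⟩ : ∃ k, m = k + 1 := ⟨m - 1, by omega⟩
    exact (up k (by omega) hn).2

theorem forall_mem_X1_of_mem_A1_succ (hJ : IsTwoJoinSplit G X1 X2 A1 B1 A2 B2)
    (hQ : IsA1X2Antipath G A1 X2 f n) (h3 : 3 ≤ n) {c : ℕ} (hc : c + 1 ≤ n)
    (hcA : f c ∈ A1) (hcA' : f (c + 1) ∈ A1) : ∀ m ≤ n, f m ∈ X1 := by
  have hA := hQ.forall_mem_A1_of_mem_A1_succ hJ hc hcA hcA'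
  have hf := hQ.isAntipathSeq
  intro m hm
  rcases Nat.eq_zero_or_pos m with rfl | h0
  · exact hf.mem_X1_of_mem_A1_of_mem_A1 hJ (m := 1) (by omega) (hA 1 (by omega) (by omega))
      (hA 2 (by omega) (by omega)) (by omega) (by omega)
  rcases lt_or_eq_of_le hm with hn | rfl
  · exact hJ.A1_subset (hA m h0 hn)
  obtain ⟨k, rfl⟩ : ∃ k, m = k + 3 := ⟨m - 3, by omega⟩
  exact hf.mem_X1_of_mem_A1_of_mem_A1 hJ (m := k + 1) (by omega)
    (hA (k + 1) (by omega) (by omega)) (hA (k + 2) (by omega) (by omega)) le_rfl (by omega)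

theorem atMostOneIn_A1 (hJ : IsTwoJoinSplit G X1 X2 A1 B1 A2 B2)
    (hQ : IsA1X2Antipath G A1 X2 f n) (h5 : 5 ≤ n)
    (hno : ∀ c, c + 1 ≤ n → f c ∈ A1 → f (c + 1) ∉ A1) : AtMostOneIn A1 f n := by
  intro i hi j hj hiA hjA
  by_contra hne
  wlog hij : i < j generalizing i j
  · exact this j hj i hi hjA hiA (Ne.symm hne) (by omega)
  have hf := hQ.isAntipathSeq
  have hjn := hQ.lt_of_mem_A1 hj hjA
  obtain ⟨k, rfl⟩ : ∃ k, i = k + 1 := ⟨i - 1, by have := hQ.pos_of_mem_A1 hiA; omega⟩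
  have hij2 : k + 3 ≤ j := by
    have : k + 2 ≠ j := fun h => hno (k + 1) (by omega) hiA (h ▸ hjA)
    omega
  have hnext := hQ.mem_X2 (i := k + 2) (by omega) (by omega) (hno (k + 1) (by omega) hiA)
  have hj3 : j = k + 3 := by
    have := hf.near_of_mem_A1 hJ hi (by omega) hj hiA hnext hjA (by omega)
    omega
  subst hj3
  rcases Nat.eq_zero_or_pos k with rfl | hk
  · have h4 := hQ.mem_X2 (i := 4) (by omega) (by omega) (hno 3 (by omega) hjA)
    have := hf.near_of_mem_A1 hJ hj (by omega) hi hjA h4 hiA (by omega)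
    omega
  · have hprev := hQ.mem_X2 hk (by omega) fun hkA => hno k (by omega) hkA hiA
    have := hf.near_of_mem_A1 hJ hi (by omega) hj hiA hprev hjA (by omega)
    omega

theorem start_mem_B1 (hJ : IsTwoJoinSplit G X1 X2 A1 B1 A2 B2)
    (hQ : IsA1X2Antipath G A1 X2 f n) (h4 : 4 ≤ n) (hA1 : AtMostOneIn A1 f n)
    (h0X : f 0 ∈ X1) : f 0 ∈ B1 := by
  obtain ⟨j, hj2, hjn, hjX⟩ : ∃ j, 2 ≤ j ∧ j < n ∧ f j ∈ X2 := by
    by_cases h2 : f 2 ∈ A1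
    · refine ⟨3, by omega, by omega, hQ.mem_X2 (by omega) (by omega) fun h3 => ?_⟩
      have := hA1 2 (by omega) 3 (by omega) h2 h3
      omega
    · exact ⟨2, le_rfl, by omega, hQ.mem_X2 (by omega) (by omega) h2⟩
  exact (hJ.mem_B_of_adj h0X hQ.start_notMem hjX
    ((hQ.isAntipathSeq 0 (by omega) j hjn.le).2 (by omega))).1

theorem mem_A1_of_ends_mem_X1 (hJ : IsTwoJoinSplit G X1 X2 A1 B1 A2 B2)
    (hQ : IsA1X2Antipath G A1 X2 f n) (h4 : 4 ≤ n) (hA1 : AtMostOneIn A1 f n)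
    (h0X : f 0 ∈ X1) (hnX : f n ∈ X1) : f 1 ∈ A1 := by
  by_contra h1A
  have hf := hQ.isAntipathSeq
  have h1X := hQ.mem_X2 (by omega) (by omega) h1A
  have h1B :=
    (hJ.mem_B_of_adj hnX hQ.end_notMem h1X ((hf n le_rfl 1 (by omega)).2 (by omega))).2
  have := (hf 0 (by omega) 1 (by omega)).1
    (hJ.adj_of_mem_B (hQ.start_mem_B1 hJ h4 hA1 h0X) h1B)
  omega

theorem end_notMem_X1 (hJ : IsTwoJoinSplit G X1 X2 A1 B1 A2 B2)
    (hQ : IsA1X2Antipath G A1 X2 f n) (h4 : 4 ≤ n) (hA1 : AtMostOneIn A1 f n)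
    (h0X : f 0 ∈ X1) : f n ∉ X1 := by
  intro hnX
  have h1 := hQ.mem_A1_of_ends_mem_X1 hJ h4 hA1 h0X hnX
  have h1' := hQ.reverse.mem_A1_of_ends_mem_X1 hJ h4 hA1.reverse (by simpa using hnX)
    (by simpa using h0X)
  have := hA1 1 (by omega) (n - 1) (by omega) h1 h1'
  omega

theorem start_notMem_X1 (hJ : IsTwoJoinSplit G X1 X2 A1 B1 A2 B2)
    (hQ : IsA1X2Antipath G A1 X2 f n) (h5 : 5 ≤ n) (hA1 : AtMostOneIn A1 f n)
    {a : ℕ} (ha : a ≤ n) (haA : f a ∈ A1) : f 0 ∉ X1 := by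
  intro h0X
  have hf := hQ.isAntipathSeq
  have hnX := (hJ.mem_X1_or_mem_X2 (f n)).resolve_left (hQ.end_notMem_X1 hJ (by omega) hA1 h0X)
  obtain ⟨j, hj2, hjn, hjfar, hjX⟩ :
      ∃ j, 2 ≤ j ∧ j ≤ n ∧ (a + 2 ≤ j ∨ j + 2 ≤ a) ∧ f j ∈ X2 := by
    by_cases han : a + 2 ≤ n
    · exact ⟨n, by omega, le_rfl, Or.inl han, hnX⟩
    · have := hQ.lt_of_mem_A1 ha haA
      refine ⟨2, le_rfl, by omega, Or.inr (by omega),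
        hQ.mem_X2 (by omega) (by omega) fun h2 => ?_⟩
      have := hA1 2 (by omega) a ha h2 haA
      omega
  exact hJ.notMem_B2_of_mem_A2 (hJ.mem_A2_of_adj haA hjX ((hf a ha j hjn).2 hjfar))
    (hJ.mem_B_of_adj h0X hQ.start_notMem hjX ((hf 0 (by omega) j hjn).2 (by omega))).2

theorem atMostOneIn_X1 (hJ : IsTwoJoinSplit G X1 X2 A1 B1 A2 B2)
    (hQ : IsA1X2Antipath G A1 X2 f n) (h5 : 5 ≤ n) (hA1 : AtMostOneIn A1 f n) :
    AtMostOneIn X1 f n := by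
  intro s hs t ht hsX htX
  by_contra hne
  wlog hst : s < t generalizing s t
  · exact this t ht s hs htX hsX (Ne.symm hne) (by omega)
  have end_notMem : ∀ a ≤ n, f a ∈ A1 → f n ∉ X1 := fun a ha haA => by
    simpa using hQ.reverse.start_notMem_X1 hJ h5 hA1.reverse (a := n - a) (by omega)
      (by simpa [Nat.sub_sub_self ha] using haA)
  rcases Nat.eq_zero_or_pos s with rfl | hs0
  · rcases lt_or_eq_of_le ht with htn | rfl
    · exact hQ.start_notMem_X1 hJ h5 hA1 ht (hQ.mem_A1 hJ (by omega) htn htX) hsX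
    · exact hQ.end_notMem_X1 hJ (by omega) hA1 hsX htX
  · have hsA := hQ.mem_A1 hJ hs0 (by omega) hsX
    rcases lt_or_eq_of_le ht with htn | rfl
    · exact hne (hA1 s hs t ht hsA (hQ.mem_A1 hJ (by omega) htn htX))
    · exact end_notMem s hs hsA htX

theorem exists_mem_A1_succ (hJ : IsTwoJoinSplit G X1 X2 A1 B1 A2 B2)
    (hQ : IsA1X2Antipath G A1 X2 f n) (h5 : 5 ≤ n) (hX1 : ¬ AtMostOneIn X1 f n) :
    ∃ c, c + 1 ≤ n ∧ f c ∈ A1 ∧ f (c + 1) ∈ A1 := by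
  by_contra! hno
  exact hX1 (hQ.atMostOneIn_X1 hJ h5 (hQ.atMostOneIn_A1 hJ h5 hno))

theorem exists_forall_mem_X2_union_singleton (hJ : IsTwoJoinSplit G X1 X2 A1 B1 A2 B2)
    (hQ : IsA1X2Antipath G A1 X2 f n) (h2 : 2 ≤ n) (hX1 : AtMostOneIn X1 f n) :
    ∃ a ∈ A1 ∪ B1, ∀ i ≤ n, f i ∈ X2 ∪ {a} := by
  by_cases h : ∃ t ≤ n, f t ∈ X1
  · obtain ⟨t, ht, htX⟩ := h
    have hX2 : ∀ i ≤ n, i ≠ t → f i ∈ X2 := fun i hi hit =>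
      (hJ.mem_X1_or_mem_X2 (f i)).resolve_left fun hiX => hit (hX1 i hi t ht hiX htX)
    refine ⟨f t, ?_, fun i hi => ?_⟩
    · by_cases hint : 0 < t ∧ t < n
      · exact Or.inl (hQ.mem_A1 hJ hint.1 hint.2 htX)
      have htA : f t ∉ A1 := by
        rcases Nat.eq_zero_or_pos t with rfl | h0
        · exact hQ.start_notMem
        · obtain rfl : t = n := by omega
          exact hQ.end_notMem
      -- `f t` is an end, and `f (n - t)` is the other one
      refine Or.inr (hJ.mem_B_of_adj htX htA (hX2 (n - t) (by omega) (by omega))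
        ((hQ.isAntipathSeq t ht (n - t) (by omega)).2 (by omega))).1
    · by_cases hit : i = t
      · exact Or.inr (hit ▸ rfl)
      · exact Or.inl (hX2 i hi hit)
  · obtain ⟨a, ha⟩ := hJ.A1_nonempty
    exact ⟨a, Or.inl ha, fun i hi =>
      Or.inl ((hJ.mem_X1_or_mem_X2 (f i)).resolve_left fun hiX => h ⟨i, hi, hiX⟩)⟩

end IsA1X2Antipath

end TwoJoinAntipaths

end BSP

/-- An antipath of length at least 5 with interior in `A1 ∪ X2` and ends
outside `A1` is even, or lies in `X2` plus one vertex of `A1 ∪ B1`. -/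
theorem antipath_with_interior_in_A1_union_X2 {V : Type*} (G : SimpleGraph V)
    (X1 X2 A1 B1 A2 B2 : Set V)
    (hBerge : BSP.Berge G)
    (hJ : BSP.IsTwoJoinSplit G X1 X2 A1 B1 A2 B2)
    (u v : V) (q : (Gᶜ).Walk u v) (hq : BSP.IsInducedPath Gᶜ q)
    (hlen : 5 ≤ q.length)
    (hint : ∀ x, BSP.Interior q x → x ∈ A1 ∪ X2)
    (hu : u ∉ A1) (hv : v ∉ A1) :
    Even q.length ∨ ∃ a ∈ A1 ∪ B1, ∀ x ∈ q.support, x ∈ X2 ∪ {a} := by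
  rcases Nat.even_or_odd q.length with heven | hodd
  · exact Or.inl heven
  have hQ := hq.isA1X2Antipath hint hu hv
  by_cases hX1 : BSP.AtMostOneIn X1 q.getVert q.length
  · obtain ⟨a, ha, hmem⟩ := hQ.exists_forall_mem_X2_union_singleton hJ (by omega) hX1
    refine Or.inr ⟨a, ha, fun x hx => ?_⟩
    obtain ⟨i, rfl, hi⟩ := SimpleGraph.Walk.mem_support_iff_exists_getVert.1 hx
    exact hmem i hi
  · obtain ⟨c, hc, hcA, hcA'⟩ := hQ.exists_mem_A1_succ hJ hlen hX1
    exact (hBerge.2 (hJ.hasOddHole_compl_of_antipath_in_X1 hq hodd (by omega)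
      (hQ.forall_mem_X1_of_mem_A1_succ hJ (by omega) hc hcA hcA')
      (hQ.forall_mem_A1_of_mem_A1_succ hJ hc hcA hcA') hu hv)).elim
end
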